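/- Let S' be an isolated suborder of a partially ordered set (S,≤), let Q be the set of equivalence classes of ≡_{S'} partially ordered by the quotient relation ≤_{S'}, and let 𝒮 ⊆ Q be a summit isolated suborder of (Q, ≤_{S'}). Then S'' := ⋃𝒮, the union of the equivalence classes belonging to 𝒮, is a summit isolated suborder of (S,≤). -/

import Mathlib

/-- `S'` is an *isolated suborder* of the partially ordered set. -/
def IsIsolatedSuborder {α : Type*} [PartialOrder α] (S' : Set α) : Prop :=
  ∃ b t, IsLeast S' b ∧ IsGreatest S' t ∧
    ∀ x ∉ S', ∀ y ∈ S', (y ≤ x → t ≤ x) ∧ (x ≤ y → x ≤ b)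

/-- The equivalence class of `x` under `≡_{S'}`. -/
def eqClass {α : Type*} (S' : Set α) (x : α) : Set α :=
  {y | (x ∈ S' ∧ y ∈ S') ∨ (x ∉ S' ∧ y = x)}

/-- The set of equivalence classes of `≡_{S'}`. -/
def quotClasses {α : Type*} (S' : Set α) : Set (Set α) :=
  Set.range (eqClass S')

/-- The quotient relation on equivalence classes. -/
def qle {α : Type*} [PartialOrder α] (A B : Set α) : Prop :=
  ∃ a ∈ A, ∃ b ∈ B, a ≤ b

/-- `b` is the least element of `A` with respect to the relation `r`. -/
def IsLeastRel {β : Type*} (r : β → β → Prop) (A : Set β) (b : β) : Prop :=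
  b ∈ A ∧ ∀ y ∈ A, r b y

/-- `t` is the greatest element of `A` with respect to the relation `r`. -/
def IsGreatestRel {β : Type*} (r : β → β → Prop) (A : Set β) (t : β) : Prop :=
  t ∈ A ∧ ∀ y ∈ A, r y t

/-- `S'` is an isolated suborder of the ordered set with carrier `carrier` and
order relation `r`. -/
def IsIsolatedSuborderRel {β : Type*} (r : β → β → Prop) (carrier S' : Set β) : Prop :=
  S' ⊆ carrier ∧ ∃ b t, IsLeastRel r S' b ∧ IsGreatestRel r S' t ∧
    ∀ x ∈ carrier, x ∉ S' → ∀ y ∈ S', (r y x → r t x) ∧ (r x y → r x b)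

/-! Every class of `≡_{S'}` is an isolated suborder (`S'` itself or a singleton), and for
two disjoint isolated suborders `A`, `B` a single relation `a ≤ b` with `a ∈ A`, `b ∈ B`
already forces `⊤_A ≤ ⊥_B`, hence all of `A` below all of `B`. So `qle` compares classes as
whole blocks: the least element of the bottom class of `𝒮` and the greatest element of its
summit class are the least and greatest elements of `⋃₀ 𝒮`, and isolation of `𝒮` in the
quotient transfers elementwise to `⋃₀ 𝒮`. -/

section

variable {α : Type*} {S' : Set α}

theorem eqClass_of_mem {x : α} (hx : x ∈ S') : eqClass S' x = S' := by
  ext y; simp [eqClass, hx]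

theorem eqClass_of_notMem {x : α} (hx : x ∉ S') : eqClass S' x = {x} := by
  ext y; simp [eqClass, hx]

theorem mem_eqClass_self (S' : Set α) (x : α) : x ∈ eqClass S' x := by
  by_cases hx : x ∈ S'
  · exact Or.inl ⟨hx, hx⟩
  · exact Or.inr ⟨hx, rfl⟩

theorem eqClass_eq_of_mem {x y : α} (h : y ∈ eqClass S' x) : eqClass S' x = eqClass S' y := by
  rcases h with ⟨hx, hy⟩ | ⟨-, rfl⟩
  · rw [eqClass_of_mem hx, eqClass_of_mem hy]
  · rfl

theorem pairwiseDisjoint_quotClasses (S' : Set α) : (quotClasses S').PairwiseDisjoint id := by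
  refine Set.pairwiseDisjoint_range_iff.2 fun x y hxy => Set.disjoint_left.2 fun z hzx hzy => hxy ?_
  exact (eqClass_eq_of_mem hzx).trans (eqClass_eq_of_mem hzy).symm

variable [PartialOrder α] {A B : Set α}

theorem isIsolatedSuborder_singleton (x : α) : IsIsolatedSuborder ({x} : Set α) :=
  ⟨x, x, isLeast_singleton, isGreatest_singleton, by
    rintro z - y rfl
    exact ⟨id, id⟩⟩

theorem IsIsolatedSuborder.of_mem_quotClasses (hS' : IsIsolatedSuborder S')
    (hA : A ∈ quotClasses S') : IsIsolatedSuborder A := by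
  obtain ⟨x, rfl⟩ := hA
  by_cases hx : x ∈ S'
  · rwa [eqClass_of_mem hx]
  · rw [eqClass_of_notMem hx]
    exact isIsolatedSuborder_singleton x

theorem IsIsolatedSuborder.le_of_qle (hA : IsIsolatedSuborder A) (hB : IsIsolatedSuborder B)
    (hAB : Disjoint A B) (h : qle A B) {a b : α} (ha : a ∈ A) (hb : b ∈ B) : a ≤ b := by
  obtain ⟨_, tA, _, htA, hisoA⟩ := hA
  obtain ⟨bB, _, hbB, _, hisoB⟩ := hB
  obtain ⟨a', ha', b', hb', hab'⟩ := h
  have htA_le : tA ≤ b' := (hisoA b' (Set.disjoint_right.mp hAB hb') a' ha').1 hab'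
  have htA_le_bB : tA ≤ bB := (hisoB tA (Set.disjoint_left.mp hAB htA.1) b' hb').2 htA_le
  exact (htA.2 ha).trans (htA_le_bB.trans (hbB.2 hb))

theorem qle_antisymm_of_mem_quotClasses (hS' : IsIsolatedSuborder S') (hA : A ∈ quotClasses S')
    (hB : B ∈ quotClasses S') (hAB : qle A B) (hBA : qle B A) : A = B := by
  refine ((pairwiseDisjoint_quotClasses S').eq_or_disjoint hA hB).resolve_right fun hd => ?_
  have hA' := hS'.of_mem_quotClasses hA
  have hB' := hS'.of_mem_quotClasses hB
  obtain ⟨a, ha, b, hb, hab⟩ := hAB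
  have hba : b ≤ a := hB'.le_of_qle hA' hd.symm hBA hb ha
  exact Set.disjoint_left.mp hd ha (le_antisymm hab hba ▸ hb)

theorem le_of_qle_of_isGreatest (hS' : IsIsolatedSuborder S') (hA : A ∈ quotClasses S')
    (hB : B ∈ quotClasses S') (h : qle A B) {a t : α} (ha : a ∈ A) (ht : IsGreatest B t) :
    a ≤ t := by
  rcases (pairwiseDisjoint_quotClasses S').eq_or_disjoint hA hB with rfl | hd
  · exact ht.2 ha
  · exact (hS'.of_mem_quotClasses hA).le_of_qle (hS'.of_mem_quotClasses hB) hd h ha ht.1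

theorem le_of_qle_of_isLeast (hS' : IsIsolatedSuborder S') (hA : A ∈ quotClasses S')
    (hB : B ∈ quotClasses S') (h : qle A B) {b c : α} (hb : IsLeast A b) (hc : c ∈ B) :
    b ≤ c := by
  rcases (pairwiseDisjoint_quotClasses S').eq_or_disjoint hA hB with rfl | hd
  · exact hb.2 hc
  · exact (hS'.of_mem_quotClasses hA).le_of_qle (hS'.of_mem_quotClasses hB) hd h hb.1 hc

end

/-- If `𝒮` is a summit isolated suborder of the quotient of `(S,≤)` by an isolated
suborder `S'` (its greatest element is maximal in the quotient), then the union of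
the classes in `𝒮` is a summit isolated suborder of `(S,≤)`. -/
theorem sUnion_summit_isolatedSuborder {α : Type*} [PartialOrder α] (S' : Set α)
    (hS' : IsIsolatedSuborder S') (𝒮 : Set (Set α))
    (h𝒮 : IsIsolatedSuborderRel qle (quotClasses S') 𝒮)
    (hsummit : ∃ T, IsGreatestRel qle 𝒮 T ∧
      ∀ B ∈ quotClasses S', qle T B → B = T) :
    IsIsolatedSuborder (⋃₀ 𝒮) ∧
      ∃ t : α, IsGreatest (⋃₀ 𝒮) t ∧ ∀ y : α, t ≤ y → y = t := by
  obtain ⟨T, ⟨hT, hT_great⟩, hT_max⟩ := hsummit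
  obtain ⟨h𝒮Q, B, T', ⟨hB, hB_least⟩, ⟨hT', hT'_great⟩, hiso⟩ := h𝒮
  obtain rfl : T = T' := qle_antisymm_of_mem_quotClasses hS' (h𝒮Q hT) (h𝒮Q hT') (hT'_great T hT)
    (hT_great T' hT')
  obtain ⟨-, t, -, ht, -⟩ := hS'.of_mem_quotClasses (h𝒮Q hT)
  obtain ⟨b, -, hb, -, -⟩ := hS'.of_mem_quotClasses (h𝒮Q hB)
  have hclass (x : α) : eqClass S' x ∈ quotClasses S' := ⟨x, rfl⟩
  have hclass_notMem {x : α} (hx : x ∉ ⋃₀ 𝒮) : eqClass S' x ∉ 𝒮 :=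
    fun h => hx ⟨_, h, mem_eqClass_self S' x⟩
  have htop : IsGreatest (⋃₀ 𝒮) t := ⟨⟨T, hT, ht.1⟩, fun y ⟨A, hA, hy⟩ =>
    le_of_qle_of_isGreatest hS' (h𝒮Q hA) (h𝒮Q hT) (hT_great A hA) hy ht⟩
  have hbot : IsLeast (⋃₀ 𝒮) b := ⟨⟨B, hB, hb.1⟩, fun y ⟨A, hA, hy⟩ =>
    le_of_qle_of_isLeast hS' (h𝒮Q hB) (h𝒮Q hA) (hB_least A hA) hb hy⟩
  have ht_max (y : α) (hy : t ≤ y) : y = t := by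
    have hyT : eqClass S' y = T := hT_max _ (hclass y) ⟨t, ht.1, y, mem_eqClass_self S' y, hy⟩
    exact le_antisymm (ht.2 (hyT ▸ mem_eqClass_self S' y)) hy
  refine ⟨⟨b, t, hbot, htop, fun x hx y ⟨A, hA, hy⟩ => ⟨fun hyx => ?_, fun hxy => ?_⟩⟩, t, htop, ht_max⟩
  · -- the class of `x` lies above the summit `T`, so it is `T`
    have hq := (hiso _ (hclass x) (hclass_notMem hx) A hA).1 ⟨y, hy, x, mem_eqClass_self S' x, hyx⟩
    exact absurd (hT_max _ (hclass x) hq ▸ hT) (hclass_notMem hx)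
  · have hq := (hiso _ (hclass x) (hclass_notMem hx) A hA).2 ⟨x, mem_eqClass_self S' x, y, hy, hxy⟩
    have hd : Disjoint (eqClass S' x) B :=
      pairwiseDisjoint_quotClasses S' (hclass x) (h𝒮Q hB) fun h => hclass_notMem hx (h ▸ hB)
    exact (hS'.of_mem_quotClasses (hclass x)).le_of_qle (hS'.of_mem_quotClasses (h𝒮Q hB)) hd hq
      (mem_eqClass_self S' x) hb.1
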